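/- arXiv:1701.05117 — 2 statements merged into one kernel-verified Lean document; each statement's English description precedes it below -/
import Mathlib

section
/- Let π be a conformal anti-invariant ξ⊥-submersion from a Sasakian manifold (M, φ, ξ, η, g_M) onto (N, g_N) with (ker π_*)^⊥ = φ(ker π_*) ⊕ ⟨ξ⟩. Then the vertical distribution ker π_* defines a totally geodesic foliation on M if and only if T_V φW = 0 for all vertical vector fields V, W. -/
/-!
For vertical `V, W` the Sasakian identity `∇_V φW = φ∇_V W + η(W) V - g(V, W) ξ`, together
with `φW` being horizontal and `η(W) = 0`, gives `T_V φW = 𝒱 φ(∇_V W)`. Since `φ` maps the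
vertical distribution into the horizontal one, `T_V φW` vanishes when `∇_V W` is vertical.
Conversely, metric compatibility and `∇ ξ = φ` give `η(∇_V W) = -g(W, φV) = 0`; if moreover
`φ(∇_V W)` is horizontal, it equals `φU` for a vertical `U` (its `ξ`-component is
`η(φ ∇_V W) = 0`), and applying `φ` once more shows `∇_V W = U`.
-/

section SasakianSubmersion

variable {F VF : Type*} {g : VF → VF → F} {phi : VF → VF} {xi : VF} {eta : VF → F}
  {nabla : VF → VF → VF} {Hh Vv : VF → VF}

theorem nabla_zero_of_sasakian [Semiring F] [AddCommGroup VF] [Module F VF]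
    (hphixi : phi xi = 0) (hetaxi : eta xi = 1)
    (hphisq : ∀ X, phi (phi X) = -X + eta X • xi) (hetag : ∀ X, eta X = g X xi)
    (hSas : ∀ X Y, nabla X (phi Y) - phi (nabla X Y) = eta Y • X - g X Y • xi)
    (hnxi : ∀ X, nabla X xi = phi X) (X : VF) : nabla X 0 = 0 := by
  have h := hSas X xi
  rw [hphixi, hnxi, hphisq, hetaxi, one_smul, ← hetag, sub_eq_iff_eq_add] at h
  rw [h]
  abel

theorem nabla_phi_of_eta_eq_zero [Semiring F] [AddCommGroup VF] [Module F VF]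
    (hSas : ∀ X Y, nabla X (phi Y) - phi (nabla X Y) = eta Y • X - g X Y • xi)
    {W : VF} (hW : eta W = 0) (V : VF) :
    nabla V (phi W) = phi (nabla V W) - g V W • xi := by
  rw [sub_eq_iff_eq_add'.mp (hSas V W), hW, zero_smul, zero_sub, sub_eq_add_neg]

theorem eta_eq_zero_of_vertical [Zero F] (hgsymm : ∀ X Y, g X Y = g Y X)
    (horth : ∀ Y Z, g (Hh Y) (Vv Z) = 0) (hetag : ∀ X, eta X = g X xi) (hxiH : Hh xi = xi)
    {W : VF} (hW : Vv W = W) : eta W = 0 := by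
  rw [hetag, hgsymm, ← hW, ← hxiH]
  exact horth xi W

theorem vertical_phi_eq_zero [Zero VF] (hVH : ∀ Z, Vv (Hh Z) = 0)
    (hanti : ∀ V, Vv V = V → Hh (phi V) = phi V) {W : VF} (hW : Vv W = W) :
    Vv (phi W) = 0 := by
  rw [← hanti W hW, hVH]

theorem T_phi_eq_vertical_phi_nabla [Semiring F] [AddCommGroup VF] [Module F VF]
    {T : VF → VF → VF}
    (hT : ∀ E G, T E G = Hh (nabla (Vv E) (Vv G)) + Vv (nabla (Vv E) (Hh G)))
    (hVadd : ∀ Y Z, Vv (Y + Z) = Vv Y + Vv Z) (hVsmul : ∀ (a : F) Z, Vv (a • Z) = a • Vv Z)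
    (hHV : ∀ Z, Hh (Vv Z) = 0) (hVH : ∀ Z, Vv (Hh Z) = 0) (hxiH : Hh xi = xi)
    (hanti : ∀ V, Vv V = V → Hh (phi V) = phi V) (hnabla0 : ∀ X, nabla X 0 = 0)
    (hSas : ∀ X Y, nabla X (phi Y) - phi (nabla X Y) = eta Y • X - g X Y • xi)
    {V W : VF} (hV : Vv V = V) (hW : Vv W = W) (hηW : eta W = 0) :
    T V (phi W) = Vv (phi (nabla V W)) := by
  let P : VF →ₗ[F] VF := { toFun := Vv, map_add' := hVadd, map_smul' := hVsmul }
  have hV0 : Vv 0 = 0 := P.map_zero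
  have hH0 : Hh 0 = 0 := by simpa only [hV0] using hHV 0
  have hVxi : Vv xi = 0 := by rw [← hxiH, hVH]
  have hVsub : Vv (phi (nabla V W) - g V W • xi) = Vv (phi (nabla V W)) := by
    change P _ = P _
    rw [P.map_sub, P.map_smul]
    change _ - _ • Vv xi = _
    rw [hVxi, smul_zero, sub_zero]
  rw [hT, hV, vertical_phi_eq_zero hVH hanti hW, hnabla0, hH0, zero_add, hanti W hW,
    nabla_phi_of_eta_eq_zero hSas hηW, hVsub]

theorem eta_nabla_eq_zero_of_vertical [AddZeroClass F] {D : VF → F → F}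
    (hgsymm : ∀ X Y, g X Y = g Y X)
    (horth : ∀ Y Z, g (Hh Y) (Vv Z) = 0) (hetag : ∀ X, eta X = g X xi) (hxiH : Hh xi = xi)
    (hanti : ∀ V, Vv V = V → Hh (phi V) = phi V) (hnxi : ∀ X, nabla X xi = phi X)
    (hmetric : ∀ X Y Z, D X (g Y Z) = g (nabla X Y) Z + g Y (nabla X Z))
    (hD0 : ∀ X, D X (0 : F) = 0) {V W : VF} (hV : Vv V = V) (hW : Vv W = W) :
    eta (nabla V W) = 0 := by
  have hWφV : g W (phi V) = 0 := by
    rw [hgsymm, ← hW, ← hanti V hV]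
    exact horth (phi V) W
  have h := hmetric V W xi
  rw [← hetag, eta_eq_zero_of_vertical hgsymm horth hetag hxiH hW, hD0, hnxi, hWφV,
    add_zero] at h
  rw [hetag, ← h]

theorem horizontal_eq_zero_iff_vertical_phi_eq_zero
    [Semiring F] [AddCommGroup VF] [Module F VF]
    (hgaddl : ∀ X Y Z, g (X + Y) Z = g X Z + g Y Z)
    (hgsmull : ∀ (a : F) X Y, g (a • X) Y = a * g X Y) (hgsymm : ∀ X Y, g X Y = g Y X)
    (hproj : ∀ Z, Hh Z + Vv Z = Z) (hHV : ∀ Z, Hh (Vv Z) = 0) (hVH : ∀ Z, Vv (Hh Z) = 0)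
    (horth : ∀ Y Z, g (Hh Y) (Vv Z) = 0) (hetaphi : ∀ X, eta (phi X) = 0)
    (hetaxi : eta xi = 1) (hphisq : ∀ X, phi (phi X) = -X + eta X • xi)
    (hetag : ∀ X, eta X = g X xi) (hxiH : Hh xi = xi)
    (hanti : ∀ V, Vv V = V → Hh (phi V) = phi V)
    (hdec : ∀ Z, Hh Z = Z → ∃ V, ∃ r : F, Vv V = V ∧ Z = phi V + r • xi)
    {A : VF} (hA : eta A = 0) : Hh A = 0 ↔ Vv (phi A) = 0 := by
  constructor
  · intro hHA
    refine vertical_phi_eq_zero hVH hanti ?_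
    simpa [hHA] using hproj A
  · intro hVφA
    obtain ⟨U, r, hU, hφA⟩ := hdec (phi A) (by simpa [hVφA] using hproj (phi A))
    have hr : r = 0 := by
      have h := hetaphi A
      rwa [hφA, hetag, hgaddl, hgsmull, ← hetag, ← hetag, hetaphi, hetaxi, mul_one,
        zero_add] at h
    have hAU : A = U := by
      have h := congrArg phi hφA
      rw [hr, zero_smul, add_zero, hphisq, hphisq, hA,
        eta_eq_zero_of_vertical hgsymm horth hetag hxiH hU, zero_smul, add_zero, add_zero] at h
      exact neg_injective h
    rw [hAU, ← hU, hHV]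

end SasakianSubmersion

theorem stmt13_general
    {F : Type*} [CommRing F]
    {VF : Type*} [AddCommGroup VF] [Module F VF]
    (g : VF → VF → F)
    (phi : VF → VF) (xi : VF) (eta : VF → F)
    (nabla : VF → VF → VF) (D : VF → F → F)
    (Hh Vv : VF → VF)
    -- g is bilinear and symmetric
    (hgaddl : ∀ X Y Z, g (X + Y) Z = g X Z + g Y Z)
    (hgsmull : ∀ (a : F) X Y, g (a • X) Y = a * g X Y)
    (hgsymm : ∀ X Y, g X Y = g Y X)
    -- Hh, Vv : complementary orthogonal linear projections
    (hVadd : ∀ Y Z, Vv (Y + Z) = Vv Y + Vv Z) (hVsmul : ∀ (a : F) Z, Vv (a • Z) = a • Vv Z)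
    (hproj : ∀ Z, Hh Z + Vv Z = Z)
    (hHV : ∀ Z, Hh (Vv Z) = 0) (hVH : ∀ Z, Vv (Hh Z) = 0)
    (horth : ∀ Y Z, g (Hh Y) (Vv Z) = 0)
    -- almost contact metric structure
    (hphixi : phi xi = 0)
    (hetaphi : ∀ X, eta (phi X) = 0)
    (hetaxi : eta xi = 1)
    (hphisq : ∀ X, phi (phi X) = -X + eta X • xi)
    (hetag : ∀ X, eta X = g X xi)
    -- Sasakian conditions
    (hSas : ∀ X Y, nabla X (phi Y) - phi (nabla X Y) = eta Y • X - g X Y • xi)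
    (hnxi : ∀ X, nabla X xi = phi X)
    -- Levi-Civita connection: compatible with the metric
    (hmetric : ∀ X Y Z, D X (g Y Z) = g (nabla X Y) Z + g Y (nabla X Z))
    (hD0 : ∀ X, D X (0 : F) = 0)
    -- ξ is horizontal and the fibres are anti-invariant: φ(ker π_*) ⊆ (ker π_*)⟂
    (hxiH : Hh xi = xi)
    (hanti : ∀ V, Vv V = V → Hh (phi V) = phi V)
    (T : VF → VF → VF)
    (hT : ∀ E G, T E G = Hh (nabla (Vv E) (Vv G)) + Vv (nabla (Vv E) (Hh G)))
    -- (ker π_*)⟂ = φ(ker π_*) ⊕ ⟨ξ⟩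
    (hdec : ∀ Z, Hh Z = Z → ∃ V, ∃ r : F, Vv V = V ∧ Z = phi V + r • xi) :
    (∀ V W, Vv V = V → Vv W = W → Hh (nabla V W) = 0) ↔
      (∀ V W, Vv V = V → Vv W = W → T V (phi W) = 0) := by
  have hnabla0 := nabla_zero_of_sasakian hphixi hetaxi hphisq hetag hSas hnxi
  refine forall₂_congr fun V W => imp_congr_right fun hV => imp_congr_right fun hW => ?_
  rw [T_phi_eq_vertical_phi_nabla hT hVadd hVsmul hHV hVH hxiH hanti hnabla0 hSas hV hW
    (eta_eq_zero_of_vertical hgsymm horth hetag hxiH hW)]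
  exact horizontal_eq_zero_iff_vertical_phi_eq_zero hgaddl hgsmull hgsymm hproj hHV hVH horth
    hetaphi hetaxi hphisq hetag hxiH hanti hdec
    (eta_nabla_eq_zero_of_vertical hgsymm horth hetag hxiH hanti hnxi hmetric hD0 hV hW)

/-- For a conformal anti-invariant `ξ⟂`-submersion from a Sasakian manifold with
`(ker π_*)⟂ = φ(ker π_*) ⊕ ⟨ξ⟩`, the vertical distribution `ker π_*` defines a
totally geodesic foliation iff `T_V φW = 0` for all vertical vector fields `V, W`. -/
theorem stmt13
    {F : Type*} [CommRing F] [Algebra ℝ F]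
    {VF : Type*} [AddCommGroup VF] [Module F VF] [Module ℝ VF] [IsScalarTower ℝ F VF]
    {TN : Type*} [AddCommGroup TN] [Module F TN] [Module ℝ TN] [IsScalarTower ℝ F TN]
    (g : VF → VF → F) (gN : TN → TN → F)
    (phi : VF → VF) (xi : VF) (eta : VF → F)
    (nabla : VF → VF → VF) (D : VF → F → F)
    (Hh Vv : VF → VF) (pis : VF → TN) (lam : F)
    -- g is bilinear and symmetric
    (hgaddl : ∀ X Y Z, g (X + Y) Z = g X Z + g Y Z)
    (hgaddr : ∀ X Y Z, g X (Y + Z) = g X Y + g X Z)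
    (hgsmull : ∀ (a : F) X Y, g (a • X) Y = a * g X Y)
    (hgsmulr : ∀ (a : F) X Y, g X (a • Y) = a * g X Y)
    (hgsymm : ∀ X Y, g X Y = g Y X)
    -- Hh, Vv : complementary orthogonal linear projections
    (hHadd : ∀ Y Z, Hh (Y + Z) = Hh Y + Hh Z) (hHsmul : ∀ (a : F) Z, Hh (a • Z) = a • Hh Z)
    (hVadd : ∀ Y Z, Vv (Y + Z) = Vv Y + Vv Z) (hVsmul : ∀ (a : F) Z, Vv (a • Z) = a • Vv Z)
    (hproj : ∀ Z, Hh Z + Vv Z = Z)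
    (hHH : ∀ Z, Hh (Hh Z) = Hh Z) (hVV : ∀ Z, Vv (Vv Z) = Vv Z)
    (hHV : ∀ Z, Hh (Vv Z) = 0) (hVH : ∀ Z, Vv (Hh Z) = 0)
    (horth : ∀ Y Z, g (Hh Y) (Vv Z) = 0)
    -- almost contact metric structure
    (hphixi : phi xi = 0)
    (hetaphi : ∀ X, eta (phi X) = 0)
    (hetaxi : eta xi = 1)
    (hphisq : ∀ X, phi (phi X) = -X + eta X • xi)
    (hcomp : ∀ X Y, g (phi X) (phi Y) = g X Y - eta X * eta Y)
    (hetag : ∀ X, eta X = g X xi)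
    -- Sasakian conditions
    (hSas : ∀ X Y, nabla X (phi Y) - phi (nabla X Y) = eta Y • X - g X Y • xi)
    (hnxi : ∀ X, nabla X xi = phi X)
    -- Levi-Civita connection: compatible with the metric
    (hmetric : ∀ X Y Z, D X (g Y Z) = g (nabla X Y) Z + g Y (nabla X Z))
    (hD0 : ∀ X, D X (0 : F) = 0)
    -- π is a horizontally conformal submersion with dilation λ, ker π_* vertical
    (hlam : IsUnit lam)
    (hconf : ∀ X Y, Hh X = X → Hh Y = Y → gN (pis X) (pis Y) = lam * lam * g X Y)
    (hpisadd : ∀ Y Z, pis (Y + Z) = pis Y + pis Z)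
    (hker : ∀ Z, pis (Vv Z) = 0)
    -- ξ is horizontal and the fibres are anti-invariant: φ(ker π_*) ⊆ (ker π_*)⟂
    (hxiH : Hh xi = xi)
    (hanti : ∀ V, Vv V = V → Hh (phi V) = phi V)
    (T : VF → VF → VF)
    (hT : ∀ E G, T E G = Hh (nabla (Vv E) (Vv G)) + Vv (nabla (Vv E) (Hh G)))
    -- (ker π_*)⟂ = φ(ker π_*) ⊕ ⟨ξ⟩
    (hdec : ∀ Z, Hh Z = Z → ∃ V, ∃ r : F, Vv V = V ∧ Z = phi V + r • xi) :
    (∀ V W, Vv V = V → Vv W = W → Hh (nabla V W) = 0) ↔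
      (∀ V W, Vv V = V → Vv W = W → T V (phi W) = 0) :=
  stmt13_general g phi xi eta nabla D Hh Vv hgaddl hgsmull hgsymm hVadd hVsmul hproj hHV hVH horth
    hphixi hetaphi hetaxi hphisq hetag hSas hnxi hmetric hD0 hxiH hanti T hT hdec
end

section
/- Let π be a conformal anti-invariant ξ⊥-submersion from a (2(m+n)+1)-dimensional Sasakian manifold M onto an (m+2n+1)-dimensional Riemannian manifold N such that π is horizontally homothetic (grad λ has no horizontal component). Then π is a harmonic map if and only if each fibre of π is a minimal submanifold of M. -/
/-! Horizontal homothety makes `grad ln λ = λ⁻¹ grad λ` vertical, so `π_*` kills it and the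
tension field reduces to `τ(π) = -m π_*μ`. Since `μ` is horizontal and `π_*` is injective on
horizontal vectors, `τ(π) = 0` exactly when `μ = 0`. -/

theorem stmt16_general
    {F : Type*} [CommRing F]
    {VF : Type*} [AddCommGroup VF] [Module F VF]
    {TN : Type*} [AddCommGroup TN] [Module ℝ TN]
    (Hh Vv : VF → VF) (pis : VF → TN) (lam : F)
    -- Hh, Vv : complementary orthogonal linear projections
    (hHsmul : ∀ (a : F) Z, Hh (a • Z) = a • Hh Z)
    (hproj : ∀ Z, Hh Z + Vv Z = Z)
    (hVH : ∀ Z, Vv (Hh Z) = 0)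
    -- π is a horizontally conformal submersion with dilation λ, ker π_* vertical
    (hlam : IsUnit lam)
    (hker : ∀ Z, pis (Vv Z) = 0)
    (m n : ℕ) (hm : 0 < m)
    (gradlam gradlnlam : VF) (mu : VF) (tau : TN)
    (hgradrel : lam • gradlnlam = gradlam)
    -- the mean curvature vector of the fibres is horizontal, π_* injective on horizontals
    (hmuH : Hh mu = mu)
    (hinj : ∀ Z, Hh Z = Z → pis Z = 0 → Z = 0)
    -- the tension field of π (Theorem: τ(π) = -m π_*μ + (1-m-2n)π_*(grad ln λ))
    (htau : tau = -((m : ℝ) • pis mu) + ((1 : ℝ) - (m : ℝ) - 2 * (n : ℝ)) • pis gradlnlam)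
    -- π is horizontally homothetic
    (hhom : Hh gradlam = 0) :
    tau = 0 ↔ mu = 0 := by
  have hgradlnlam_vert : Hh gradlnlam = 0 := by
    rw [← hlam.smul_eq_zero, ← hHsmul, hgradrel, hhom]
  have hpis_gradlnlam : pis gradlnlam = 0 := by
    rw [← hproj gradlnlam, hgradlnlam_vert, zero_add, hker]
  have hpis_zero : pis 0 = 0 := by
    simpa only [hVH] using hker (Hh 0)
  have hm' : (m : ℝ) ≠ 0 := by positivity
  rw [htau, hpis_gradlnlam, smul_zero, add_zero, neg_eq_zero, smul_eq_zero_iff_right hm']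
  exact ⟨hinj mu hmuH, fun hmu => hmu ▸ hpis_zero⟩

/-- For a conformal anti-invariant `ξ⟂`-submersion `π` from a `2(m+n)+1`-dimensional
Sasakian manifold onto an `(m+2n+1)`-dimensional Riemannian manifold which is
horizontally homothetic, `π` is harmonic iff the fibres are minimal. -/
theorem stmt16
    {F : Type*} [CommRing F] [Algebra ℝ F]
    {VF : Type*} [AddCommGroup VF] [Module F VF] [Module ℝ VF] [IsScalarTower ℝ F VF]
    {TN : Type*} [AddCommGroup TN] [Module F TN] [Module ℝ TN] [IsScalarTower ℝ F TN]
    (g : VF → VF → F) (gN : TN → TN → F)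
    (phi : VF → VF) (xi : VF) (eta : VF → F)
    (nabla : VF → VF → VF) (D : VF → F → F)
    (Hh Vv : VF → VF) (pis : VF → TN) (lam : F)
    -- g is bilinear and symmetric
    (hgaddl : ∀ X Y Z, g (X + Y) Z = g X Z + g Y Z)
    (hgaddr : ∀ X Y Z, g X (Y + Z) = g X Y + g X Z)
    (hgsmull : ∀ (a : F) X Y, g (a • X) Y = a * g X Y)
    (hgsmulr : ∀ (a : F) X Y, g X (a • Y) = a * g X Y)
    (hgsymm : ∀ X Y, g X Y = g Y X)
    -- Hh, Vv : complementary orthogonal linear projections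
    (hHadd : ∀ Y Z, Hh (Y + Z) = Hh Y + Hh Z) (hHsmul : ∀ (a : F) Z, Hh (a • Z) = a • Hh Z)
    (hVadd : ∀ Y Z, Vv (Y + Z) = Vv Y + Vv Z) (hVsmul : ∀ (a : F) Z, Vv (a • Z) = a • Vv Z)
    (hproj : ∀ Z, Hh Z + Vv Z = Z)
    (hHH : ∀ Z, Hh (Hh Z) = Hh Z) (hVV : ∀ Z, Vv (Vv Z) = Vv Z)
    (hHV : ∀ Z, Hh (Vv Z) = 0) (hVH : ∀ Z, Vv (Hh Z) = 0)
    (horth : ∀ Y Z, g (Hh Y) (Vv Z) = 0)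
    -- almost contact metric structure
    (hphixi : phi xi = 0)
    (hetaphi : ∀ X, eta (phi X) = 0)
    (hetaxi : eta xi = 1)
    (hphisq : ∀ X, phi (phi X) = -X + eta X • xi)
    (hcomp : ∀ X Y, g (phi X) (phi Y) = g X Y - eta X * eta Y)
    (hetag : ∀ X, eta X = g X xi)
    -- Sasakian conditions
    (hSas : ∀ X Y, nabla X (phi Y) - phi (nabla X Y) = eta Y • X - g X Y • xi)
    (hnxi : ∀ X, nabla X xi = phi X)
    -- Levi-Civita connection: compatible with the metric
    (hmetric : ∀ X Y Z, D X (g Y Z) = g (nabla X Y) Z + g Y (nabla X Z))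
    (hD0 : ∀ X, D X (0 : F) = 0)
    -- π is a horizontally conformal submersion with dilation λ, ker π_* vertical
    (hlam : IsUnit lam)
    (hconf : ∀ X Y, Hh X = X → Hh Y = Y → gN (pis X) (pis Y) = lam * lam * g X Y)
    (hpisadd : ∀ Y Z, pis (Y + Z) = pis Y + pis Z)
    (hker : ∀ Z, pis (Vv Z) = 0)
    -- ξ is horizontal and the fibres are anti-invariant: φ(ker π_*) ⊆ (ker π_*)⟂
    (hxiH : Hh xi = xi)
    (hanti : ∀ V, Vv V = V → Hh (phi V) = phi V)
    (m n : ℕ) (hm : 0 < m)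
    (lnlam : F) (gradlam gradlnlam : VF) (mu : VF) (tau : TN)
    (hgrad : ∀ Z, D Z lam = g Z gradlam)
    (hgradln : ∀ Z, D Z lnlam = g Z gradlnlam)
    (hgradrel : lam • gradlnlam = gradlam)
    -- the mean curvature vector of the fibres is horizontal, π_* injective on horizontals
    (hmuH : Hh mu = mu)
    (hinj : ∀ Z, Hh Z = Z → pis Z = 0 → Z = 0)
    -- the tension field of π (Theorem: τ(π) = -m π_*μ + (1-m-2n)π_*(grad ln λ))
    (htau : tau = -((m : ℝ) • pis mu) + ((1 : ℝ) - (m : ℝ) - 2 * (n : ℝ)) • pis gradlnlam)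
    -- π is horizontally homothetic
    (hhom : Hh gradlam = 0) :
    tau = 0 ↔ mu = 0 :=
  stmt16_general Hh Vv pis lam hHsmul hproj hVH hlam hker m n hm gradlam gradlnlam mu tau hgradrel
    hmuH hinj htau hhom
end
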